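/- Let n ≥ 1 and let a, x ∈ A_n be doubly pure. Then a·x − x̃·ã = 0 if and only if ⟨ã, x⟩ = 0. -/

import Mathlib

noncomputable section

open scoped Quaternion

/-- The Cayley–Dickson algebra `A n = ℝ^(2^n)` as a type. -/
def CD : ℕ → Type
  | 0 => ℝ
  | n + 1 => CD n × CD n

namespace CD

instance instAddCommGroup : (n : ℕ) → AddCommGroup (CD n)
  | 0 => inferInstanceAs (AddCommGroup ℝ)
  | n + 1 =>
    letI := instAddCommGroup n
    inferInstanceAs (AddCommGroup (CD n × CD n))

instance instModule : (n : ℕ) → Module ℝ (CD n)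
  | 0 => inferInstanceAs (Module ℝ ℝ)
  | n + 1 =>
    letI := instModule n
    inferInstanceAs (Module ℝ (CD n × CD n))

/-- Conjugation in the Cayley–Dickson algebra. -/
def conj : {n : ℕ} → CD n → CD n
  | 0, x => x
  | _ + 1, x => (conj x.1, -x.2)

/-- Cayley–Dickson multiplication. -/
def mul : {n : ℕ} → CD n → CD n → CD n
  | 0, x, y => Mul.mul (α := ℝ) x y
  | _ + 1, x, y =>
    (mul x.1 y.1 - mul (conj y.2) x.2, mul y.2 x.1 + mul x.2 (conj y.1))

instance instMul (n : ℕ) : Mul (CD n) := ⟨mul⟩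

/-- The multiplicative unit `e₀`. -/
def one : {n : ℕ} → CD n
  | 0 => (1 : ℝ)
  | _ + 1 => (one, 0)

instance instOne (n : ℕ) : One (CD n) := ⟨one⟩

/-- The Euclidean inner product on `A n = ℝ^(2^n)`. -/
def inner : {n : ℕ} → CD n → CD n → ℝ
  | 0, x, y => (x * y : ℝ)
  | _ + 1, x, y => inner x.1 y.1 + inner x.2 y.2

/-- The Euclidean norm on `A n = ℝ^(2^n)`. -/
def norm {n : ℕ} (x : CD n) : ℝ := Real.sqrt (inner x x)

/-- `ã = (-a₂, a₁)`. -/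
def tilde {n : ℕ} (a : CD (n + 1)) : CD (n + 1) := (-a.2, a.1)

/-- `ẽ₀ = (0, e₀)`. -/
def etilde (n : ℕ) : CD (n + 1) := ((0 : CD n), (1 : CD n))

/-- An element is pure if its conjugate is its negative. -/
def IsPure {n : ℕ} (a : CD n) : Prop := conj a = -a

/-- An element of `A (n+1)` is doubly pure if both of its coordinates are pure. -/
def IsDoublyPure {n : ℕ} (a : CD (n + 1)) : Prop := IsPure a.1 ∧ IsPure a.2

/-- The associator `(a,b,c) = (ab)c - a(bc)`. -/
def assoc {n : ℕ} (a b c : CD n) : CD n := a * b * c - a * (b * c)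

/-- An element is alternative if `(a,a,x) = 0` for all `x`. -/
def IsAlternative {n : ℕ} (a : CD n) : Prop := ∀ x : CD n, assoc a a x = 0

/-- An element is strongly alternative if `(a,a,x) = 0` and `(a,x,x) = 0` for all `x`. -/
def IsStronglyAlternative {n : ℕ} (a : CD n) : Prop :=
  (∀ x : CD n, assoc a a x = 0) ∧ (∀ x : CD n, assoc a x x = 0)

/-- The pure (imaginary) part of an element. -/
def im {n : ℕ} (a : CD n) : CD n := (2⁻¹ : ℝ) • (a - conj a)

/-- `H a`, the span of `{e₀, ã, a, ẽ₀}`. -/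
def H {n : ℕ} (a : CD (n + 1)) : Submodule ℝ (CD (n + 1)) :=
  Submodule.span ℝ {(1 : CD (n + 1)), tilde a, a, etilde n}

/-- The orthogonal complement of `H a`. -/
def Hperp {n : ℕ} (a : CD (n + 1)) : Set (CD (n + 1)) :=
  {x | ∀ y ∈ H a, inner y x = 0}

end CD

/-! Expanding the Cayley–Dickson products coordinatewise, the first coordinates of `a x` and
`x̃ ã` agree for doubly pure `a, x`, and their second coordinates differ by
`(a₁x₂ + x₂a₁) - (a₂x₁ + x₁a₂)`. For pure `u, v` the polarization identity
`conj u · v + conj v · u = 2⟨u, v⟩ e₀` reads `uv + vu = -2⟨u, v⟩ e₀`, so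
`a x - x̃ ã = -2⟨ã, x⟩ ẽ₀`, which vanishes exactly when `⟨ã, x⟩ = 0`. -/

namespace CD

variable {n : ℕ}

@[ext]
lemma ext_succ {x y : CD (n + 1)} (h₁ : x.1 = y.1) (h₂ : x.2 = y.2) : x = y := Prod.ext h₁ h₂

@[simp] lemma fst_add (x y : CD (n + 1)) : (x + y).1 = x.1 + y.1 := rfl
@[simp] lemma snd_add (x y : CD (n + 1)) : (x + y).2 = x.2 + y.2 := rfl
@[simp] lemma fst_neg (x : CD (n + 1)) : (-x).1 = -x.1 := rfl
@[simp] lemma snd_neg (x : CD (n + 1)) : (-x).2 = -x.2 := rfl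
@[simp] lemma fst_sub (x y : CD (n + 1)) : (x - y).1 = x.1 - y.1 := rfl
@[simp] lemma snd_sub (x y : CD (n + 1)) : (x - y).2 = x.2 - y.2 := rfl
@[simp] lemma fst_smul (c : ℝ) (x : CD (n + 1)) : (c • x).1 = c • x.1 := rfl
@[simp] lemma snd_smul (c : ℝ) (x : CD (n + 1)) : (c • x).2 = c • x.2 := rfl
@[simp] lemma fst_one : (1 : CD (n + 1)).1 = 1 := rfl
@[simp] lemma snd_one : (1 : CD (n + 1)).2 = 0 := rfl
@[simp] lemma fst_conj (x : CD (n + 1)) : (conj x).1 = conj x.1 := rfl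
@[simp] lemma snd_conj (x : CD (n + 1)) : (conj x).2 = -x.2 := rfl
@[simp] lemma fst_mul (x y : CD (n + 1)) : (x * y).1 = x.1 * y.1 - conj y.2 * x.2 := rfl
@[simp] lemma snd_mul (x y : CD (n + 1)) : (x * y).2 = y.2 * x.1 + x.2 * conj y.1 := rfl
@[simp] lemma fst_etilde : (etilde n).1 = 0 := rfl
@[simp] lemma snd_etilde : (etilde n).2 = 1 := rfl
@[simp] lemma fst_tilde (x : CD (n + 1)) : (tilde x).1 = -x.2 := rfl
@[simp] lemma snd_tilde (x : CD (n + 1)) : (tilde x).2 = x.1 := rfl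

lemma inner_succ (x y : CD (n + 1)) : inner x y = inner x.1 y.1 + inner x.2 y.2 := rfl

lemma conj_neg : ∀ {n : ℕ} (x : CD n), conj (-x) = -conj x
  | 0, _ => rfl
  | _ + 1, x => ext_succ (conj_neg x.1) rfl

mutual

protected theorem neg_mul : ∀ {n : ℕ} (x y : CD n), -x * y = -(x * y)
  | 0, x, y => _root_.neg_mul (α := ℝ) x y
  | _ + 1, x, y => by
    ext
    · simp only [fst_mul, fst_neg, snd_neg, CD.neg_mul x.1, CD.mul_neg (conj y.2)]; abel
    · simp only [snd_mul, snd_neg, fst_neg, CD.mul_neg y.2, CD.neg_mul x.2]; abel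

protected theorem mul_neg : ∀ {n : ℕ} (x y : CD n), x * -y = -(x * y)
  | 0, x, y => _root_.mul_neg (α := ℝ) x y
  | _ + 1, x, y => by
    ext
    · simp only [fst_mul, fst_neg, snd_neg, conj_neg, CD.mul_neg x.1, CD.neg_mul (conj y.2)]; abel
    · simp only [snd_mul, snd_neg, fst_neg, conj_neg, CD.neg_mul y.2, CD.mul_neg x.2]; abel

end

instance instHasDistribNeg (n : ℕ) : HasDistribNeg (CD n) where
  neg_mul := CD.neg_mul
  mul_neg := CD.mul_neg

protected lemma one_ne_zero : ∀ {n : ℕ}, (1 : CD n) ≠ 0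
  | 0 => one_ne_zero (α := ℝ)
  | _ + 1 => fun h => CD.one_ne_zero (congrArg Prod.fst h)

lemma etilde_ne_zero : etilde n ≠ 0 := fun h => CD.one_ne_zero (congrArg Prod.snd h)

lemma inner_neg_left : ∀ {n : ℕ} (x y : CD n), inner (-x) y = -inner x y
  | 0, x, y => _root_.neg_mul (α := ℝ) x y
  | _ + 1, x, y => by
    rw [inner_succ, inner_succ, fst_neg, snd_neg, inner_neg_left, inner_neg_left, neg_add]

lemma conj_mul_add_conj_mul : ∀ {n : ℕ} (u v : CD n),
    conj u * v + conj v * u = (2 * inner u v) • (1 : CD n)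
  | 0, u, v => (by intros; ring : ∀ u v : ℝ, u * v + v * u = 2 * (u * v) * 1) u v
  | _ + 1, u, v => by
    ext
    · have h₁ := conj_mul_add_conj_mul u.1 v.1
      have h₂ := conj_mul_add_conj_mul u.2 v.2
      simp only [fst_add, fst_mul, fst_conj, snd_conj, mul_neg, fst_smul, fst_one, inner_succ]
      rw [mul_add, add_smul, ← h₁, ← h₂]
      abel
    · simp only [snd_add, snd_mul, fst_conj, snd_conj, neg_mul, snd_smul, snd_one, smul_zero]
      abel

lemma IsPure.mul_add_mul {u v : CD n} (hu : IsPure u) (hv : IsPure v) :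
    u * v + v * u = -(2 * inner u v) • (1 : CD n) := by
  have h := conj_mul_add_conj_mul u v
  rw [hu, hv, neg_mul, neg_mul, ← neg_add, neg_eq_iff_eq_neg] at h
  rw [h, neg_smul]

lemma inner_tilde_left (a x : CD (n + 1)) : inner (tilde a) x = inner a.1 x.2 - inner a.2 x.1 := by
  rw [inner_succ, fst_tilde, snd_tilde, inner_neg_left]
  ring

lemma IsDoublyPure.mul_sub_tilde_mul_tilde {a x : CD (n + 1)} (ha : IsDoublyPure a)
    (hx : IsDoublyPure x) :
    a * x - tilde x * tilde a = -(2 * inner (tilde a) x) • etilde n := by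
  have key : a.1 * x.2 + x.2 * a.1 - (a.2 * x.1 + x.1 * a.2) = -(2 * inner (tilde a) x) • 1 := by
    rw [ha.1.mul_add_mul hx.2, ha.2.mul_add_mul hx.1, inner_tilde_left, ← sub_smul]
    congr 1
    ring
  obtain ⟨ha₁, ha₂⟩ : conj a.1 = -a.1 ∧ conj a.2 = -a.2 := ha
  obtain ⟨hx₁, hx₂⟩ : conj x.1 = -x.1 ∧ conj x.2 = -x.2 := hx
  ext
  · simp only [fst_sub, fst_mul, fst_tilde, snd_tilde, ha₁, hx₂, neg_mul, mul_neg, neg_neg,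
      fst_smul, fst_etilde, smul_zero]
    abel
  · simp only [snd_sub, snd_mul, fst_tilde, snd_tilde, hx₁, conj_neg, ha₂, mul_neg, neg_neg,
      snd_smul, snd_etilde, ← key]
    abel

end CD

/-- For doubly pure `a, x`, `a·x − x̃·ã = 0 ↔ ⟨ã, x⟩ = 0`. -/
theorem mul_sub_tilde_mul_tilde_eq_zero_iff_inner_tilde_eq_zero (n : ℕ) (a x : CD (n + 1))
    (ha : CD.IsDoublyPure a) (hx : CD.IsDoublyPure x) :
    a * x - CD.tilde x * CD.tilde a = 0 ↔ CD.inner (CD.tilde a) x = 0 := by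
  rw [ha.mul_sub_tilde_mul_tilde hx, smul_eq_zero, or_iff_left CD.etilde_ne_zero, neg_eq_zero,
    mul_eq_zero, or_iff_right two_ne_zero]
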